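/- Assuming the theorem of Robertson, Seymour and Thomas that every graph with no K_6-minor is 5-colourable, every finite graph G with η(G) ≥ 5 satisfies (2α(G) − 1)(2η(G) − 5) ≥ 2|V(G)| − 5. -/

import Mathlib

open SimpleGraph

/-- A set of vertices is independent: no two of its vertices are adjacent. -/
def IsIndepSet {V : Type*} (G : SimpleGraph V) (s : Set V) : Prop :=
  s.Pairwise fun a b => ¬ G.Adj a b

/-- The independence number of a graph. -/
noncomputable def indepNum {V : Type*} [Fintype V] (G : SimpleGraph V) : ℕ :=
  sSup {n | ∃ s : Finset V, _root_.IsIndepSet G ↑s ∧ s.card = n}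

/-- A set of vertices is connected if it induces a connected subgraph. -/
def IsConnSet {V : Type*} (G : SimpleGraph V) (s : Set V) : Prop :=
  (G.induce s).Connected

/-- A set of vertices is dominating if every vertex outside it has a neighbour in it. -/
def IsDomSet {V : Type*} (G : SimpleGraph V) (s : Set V) : Prop :=
  ∀ v ∉ s, ∃ u ∈ s, G.Adj u v

/-- `G` has a `K_n`-minor, witnessed by `n` pairwise disjoint nonempty connected
branch sets with an edge between each pair. -/
def HasCliqueMinor {V : Type*} (G : SimpleGraph V) (n : ℕ) : Prop :=
  ∃ B : Fin n → Set V,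
    (∀ i, (B i).Nonempty) ∧
    (∀ i, IsConnSet G (B i)) ∧
    (Pairwise fun i j => Disjoint (B i) (B j)) ∧
    (Pairwise fun i j => ∃ u ∈ B i, ∃ v ∈ B j, G.Adj u v)

/-- The Hadwiger number: the largest `n` such that `K_n` is a minor of `G`. -/
noncomputable def hadwigerNum {V : Type*} [Fintype V] (G : SimpleGraph V) : ℕ :=
  sSup {n | HasCliqueMinor G n}

/-!
We prove, by induction on `|V|`, the bound with `η(G)` replaced by any `h ≥ max 5 η(G)`.
If `G` has no `K₆`-minor it is 5-colourable, so `|V| ≤ 5α`. If `G` is disconnected, the bounds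
for a component and for the rest add up, since `α` is additive over them. If `G` is connected,
it has a connected dominating set `D` with `|D| < 2α`: grow `D` greedily by a vertex at distance
two together with its predecessor, putting the former into an independent subset. Contracting `D`
to a vertex turns a `K_k`-minor of `G - D` into a `K_{k+1}`-minor of `G`, so the bound for
`G - D` with `h - 1` gives the bound for `G` with `h`.
-/

theorem indepNum_eq_simpleGraph_indepNum {V : Type*} [Fintype V] (G : SimpleGraph V) :
    _root_.indepNum G = G.indepNum := by
  simp only [_root_.indepNum, SimpleGraph.indepNum, isNIndepSet_iff]
  rfl

namespace SimpleGraph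

variable {V : Type*} (G : SimpleGraph V)

theorem exists_isIndepSet_card_eq_indepNum_induce (s : Set V) :
    ∃ t : Finset V, ↑t ⊆ s ∧ G.IsIndepSet t ∧ t.card = (G.induce s).indepNum := by
  obtain ⟨t, ht, hcard⟩ := (G.induce s).exists_isNIndepSet_indepNum
  refine ⟨t.map (Function.Embedding.subtype _), by simp, ?_, by simpa using hcard⟩
  rw [Finset.coe_map]
  rintro _ ⟨a, ha, rfl⟩ _ ⟨b, hb, rfl⟩ hab
  exact ht ha hb (ne_of_apply_ne _ hab)

variable [Finite V]

theorem one_le_indepNum [Nonempty V] : 1 ≤ G.indepNum := by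
  classical
  have h : G.IsIndepSet ↑({Classical.arbitrary V} : Finset V) := by
    simp [isIndepSet_iff]
  simpa using h.card_le_indepNum

theorem Colorable.card_le_mul_indepNum {k : ℕ} (h : G.Colorable k) :
    Nat.card V ≤ k * G.indepNum := by
  classical
  have := Fintype.ofFinite V
  rw [Nat.card_eq_fintype_card]
  obtain ⟨C⟩ := h
  have hclass (c : Fin k) : G.IsIndepSet ↑({v | C v = c} : Finset V) := by
    simpa [Coloring.colorClass] using C.isIndepSet_colorClass c
  simpa [mul_comm] using Finset.card_le_mul_card_image_of_maps_to (s := Finset.univ)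
    (t := Finset.univ) (f := C) (by simp) G.indepNum fun c _ => (hclass c).card_le_indepNum

theorem indepNum_induce_le (s : Set V) : (G.induce s).indepNum ≤ G.indepNum := by
  obtain ⟨t, -, ht, hcard⟩ := G.exists_isIndepSet_card_eq_indepNum_induce s
  exact hcard ▸ ht.card_le_indepNum

theorem indepNum_induce_add_indepNum_induce_compl_le {s : Set V}
    (hs : ∀ u ∈ s, ∀ v, G.Adj u v → v ∈ s) :
    (G.induce s).indepNum + (G.induce sᶜ).indepNum ≤ G.indepNum := by
  classical
  obtain ⟨t₁, hts₁, ht₁, hcard₁⟩ := G.exists_isIndepSet_card_eq_indepNum_induce s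
  obtain ⟨t₂, hts₂, ht₂, hcard₂⟩ := G.exists_isIndepSet_card_eq_indepNum_induce sᶜ
  have hdisj : Disjoint t₁ t₂ := by
    rw [← Finset.disjoint_coe]
    exact disjoint_compl_right.mono hts₁ hts₂
  have hindep : G.IsIndepSet ↑(t₁ ∪ t₂) := by
    rw [Finset.coe_union, isIndepSet_iff, Set.pairwise_union]
    exact ⟨ht₁, ht₂, fun a ha b hb _ => ⟨fun hab => hts₂ hb (hs a (hts₁ ha) b hab),
      fun hba => hts₂ hb (hs a (hts₁ ha) b hba.symm)⟩⟩
  simpa [Finset.card_union_of_disjoint hdisj, hcard₁, hcard₂] using hindep.card_le_indepNum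

end SimpleGraph

theorem IsConnSet.image_val {V : Type*} {G : SimpleGraph V} {s : Set V} {B : Set s}
    (hB : IsConnSet (G.induce s) B) : IsConnSet G (Subtype.val '' B) := by
  let f : (G.induce s).induce B →g G.induce (Subtype.val '' B) :=
    { toFun x := ⟨x.1.1, x.1, x.2, rfl⟩
      map_rel' h := h }
  refine hB.map f ?_
  rintro ⟨_, x, hx, rfl⟩
  exact ⟨⟨x, hx⟩, rfl⟩

structure IsCliqueMinorModel {ι V : Type*} (G : SimpleGraph V) (B : ι → Set V) : Prop where
  nonempty : ∀ i, (B i).Nonempty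
  isConnSet : ∀ i, IsConnSet G (B i)
  disjoint : Pairwise fun i j => Disjoint (B i) (B j)
  adj : Pairwise fun i j => ∃ u ∈ B i, ∃ v ∈ B j, G.Adj u v

namespace IsCliqueMinorModel

variable {ι V : Type*} {G : SimpleGraph V} {B : ι → Set V}

theorem hasCliqueMinor [Fintype ι] (hB : IsCliqueMinorModel G B) :
    HasCliqueMinor G (Fintype.card ι) := by
  set e := (Fintype.equivFin ι).symm
  exact ⟨B ∘ e, fun i => hB.nonempty _, fun i => hB.isConnSet _,
    fun i j hij => hB.disjoint (e.injective.ne hij), fun i j hij => hB.adj (e.injective.ne hij)⟩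

theorem card_le [Fintype ι] [Fintype V] (hB : IsCliqueMinorModel G B) :
    Fintype.card ι ≤ Fintype.card V := by
  choose v hv using hB.nonempty
  refine Fintype.card_le_of_injective v fun i j hij => by_contra fun hne => ?_
  exact Set.disjoint_left.mp (hB.disjoint hne) (hv i) (hij ▸ hv j)

theorem image_val {s : Set V} {B : ι → Set s} (hB : IsCliqueMinorModel (G.induce s) B) :
    IsCliqueMinorModel G fun i => Subtype.val '' B i where
  nonempty i := (hB.nonempty i).image _
  isConnSet i := (hB.isConnSet i).image_val
  disjoint i j hij := (Set.disjoint_image_iff Subtype.val_injective).mpr (hB.disjoint hij)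
  adj i j hij := by
    obtain ⟨u, hu, v, hv, huv⟩ := hB.adj hij
    exact ⟨u, Set.mem_image_of_mem _ hu, v, Set.mem_image_of_mem _ hv, huv⟩

theorem option_elim {D : Set V} (hB : IsCliqueMinorModel G B) (hD : IsConnSet G D)
    (hdisj : ∀ i, Disjoint D (B i)) (hadj : ∀ i, ∃ u ∈ D, ∃ v ∈ B i, G.Adj u v) :
    IsCliqueMinorModel G fun o : Option ι => o.elim D B where
  nonempty
    | none => Set.nonempty_coe_sort.mp hD.nonempty
    | some i => hB.nonempty i
  isConnSet
    | none => hD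
    | some i => hB.isConnSet i
  disjoint
    | none, none, h => (h rfl).elim
    | none, some j, _ => hdisj j
    | some i, none, _ => (hdisj i).symm
    | some i, some j, h => hB.disjoint fun e => h (congrArg some e)
  adj
    | none, none, h => (h rfl).elim
    | none, some j, _ => hadj j
    | some i, none, _ => by
      obtain ⟨u, hu, v, hv, huv⟩ := hadj i
      exact ⟨v, hv, u, hu, huv.symm⟩
    | some i, some j, h => hB.adj fun e => h (congrArg some e)

end IsCliqueMinorModel

theorem hasCliqueMinor_iff {V : Type*} {G : SimpleGraph V} {n : ℕ} :
    HasCliqueMinor G n ↔ ∃ B : Fin n → Set V, IsCliqueMinorModel G B :=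
  ⟨fun ⟨B, h₁, h₂, h₃, h₄⟩ => ⟨B, h₁, h₂, h₃, h₄⟩,
    fun ⟨B, h₁, h₂, h₃, h₄⟩ => ⟨B, h₁, h₂, h₃, h₄⟩⟩

section HadwigerNum

variable {V : Type*} [Fintype V] {G : SimpleGraph V}

theorem HasCliqueMinor.le_card {n : ℕ} (h : HasCliqueMinor G n) : n ≤ Fintype.card V := by
  obtain ⟨B, hB⟩ := hasCliqueMinor_iff.mp h
  simpa using hB.card_le

theorem hasCliqueMinor_hadwigerNum (G : SimpleGraph V) : HasCliqueMinor G (hadwigerNum G) :=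
  Nat.sSup_mem
    ⟨0, hasCliqueMinor_iff.mpr ⟨Fin.elim0, (·.elim0), (·.elim0), (·.elim0), (·.elim0)⟩⟩
    ⟨_, fun _ => HasCliqueMinor.le_card⟩

theorem HasCliqueMinor.le_hadwigerNum {n : ℕ} (h : HasCliqueMinor G n) : n ≤ hadwigerNum G :=
  le_csSup ⟨_, fun _ => HasCliqueMinor.le_card⟩ h

theorem hadwigerNum_le_card : hadwigerNum G ≤ Fintype.card V :=
  (hasCliqueMinor_hadwigerNum G).le_card

theorem hadwigerNum_induce_le (s : Set V) [Fintype s] :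
    hadwigerNum (G.induce s) ≤ hadwigerNum G := by
  obtain ⟨B, hB⟩ := hasCliqueMinor_iff.mp (hasCliqueMinor_hadwigerNum (G.induce s))
  simpa using hB.image_val.hasCliqueMinor.le_hadwigerNum

theorem hadwigerNum_induce_compl_add_one_le {D : Set V} [Fintype ↥Dᶜ] (hconn : IsConnSet G D)
    (hdom : IsDomSet G D) : hadwigerNum (G.induce Dᶜ) + 1 ≤ hadwigerNum G := by
  obtain ⟨B, hB⟩ := hasCliqueMinor_iff.mp (hasCliqueMinor_hadwigerNum (G.induce Dᶜ))
  have hdisj (i) : Disjoint D (Subtype.val '' B i) := by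
    rw [Set.disjoint_right]
    rintro _ ⟨v, -, rfl⟩
    exact v.2
  have hadj (i) : ∃ u ∈ D, ∃ v ∈ Subtype.val '' B i, G.Adj u v := by
    obtain ⟨v, hv⟩ := hB.nonempty i
    obtain ⟨u, hu, huv⟩ := hdom v v.2
    exact ⟨u, hu, v, Set.mem_image_of_mem _ hv, huv⟩
  simpa using (hB.image_val.option_elim hconn hdisj hadj).hasCliqueMinor.le_hadwigerNum

end HadwigerNum

section DominatingSet

variable {V : Type*} {G : SimpleGraph V}

theorem exists_adj_adj_of_not_isDomSet (hG : G.Connected) {S : Set V} (hS : S.Nonempty)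
    (hdom : ¬ IsDomSet G S) :
    ∃ u ∈ S, ∃ x w, G.Adj u x ∧ G.Adj x w ∧ w ∉ S ∧ ∀ v ∈ S, ¬ G.Adj v w := by
  obtain ⟨s, hs⟩ := hS
  obtain ⟨v, hvS, hv⟩ : ∃ v ∉ S, ∀ u ∈ S, ¬ G.Adj u v := by
    simpa [IsDomSet] using hdom
  let N : Set V := {y | y ∈ S ∨ ∃ u ∈ S, G.Adj u y}
  obtain ⟨d, -, hx, hw⟩ := (hG.preconnected s v).some.exists_boundary_dart N (.inl hs)
    (by simpa [N, hvS] using hv)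
  simp only [N, Set.mem_ofPred_eq, not_or, not_exists, not_and] at hx hw
  have hxS : d.fst ∉ S := fun h => hw.2 _ h d.adj
  obtain ⟨u, hu, hux⟩ := hx.resolve_left hxS
  exact ⟨u, hu, d.fst, d.snd, hux, d.adj, hw.1, hw.2⟩

variable [Fintype V]

theorem exists_isConnSet_isDomSet_card_lt (hG : G.Connected) :
    ∃ D : Finset V, IsConnSet G D ∧ IsDomSet G D ∧ D.card < 2 * G.indepNum := by
  classical
  let P (S I : Finset V) : Prop :=
    I ⊆ S ∧ IsConnSet G S ∧ G.IsIndepSet I ∧ S.card < 2 * I.card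
  obtain ⟨v⟩ := hG.nonempty
  have hv : P {v} {v} := by
    refine ⟨subset_rfl, ?_, by simp [isIndepSet_iff], by simp⟩
    rw [IsConnSet, Finset.coe_singleton, induce_singleton_eq_top]
    exact connected_top
  obtain ⟨⟨S, I⟩, hSI, hmax⟩ :=
    Finset.exists_max_image {p | P p.1 p.2} (·.2.card) ⟨({v}, {v}), by simpa using hv⟩
  simp only [Finset.mem_filter, Finset.mem_univ, true_and] at hSI hmax
  obtain ⟨hIS, hS, hI, hcard⟩ := hSI
  refine ⟨S, hS, by_contra fun hdom => ?_,
    hcard.trans_le (Nat.mul_le_mul_left 2 hI.card_le_indepNum)⟩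
  have hSne : (S : Set V).Nonempty := by
    obtain ⟨i, hi⟩ := Finset.card_pos.mp (by omega : 0 < I.card)
    exact ⟨i, hIS hi⟩
  obtain ⟨u, hu, x, w, hux, hxw, hwS, hw⟩ := exists_adj_adj_of_not_isDomSet hG hSne hdom
  have hwI : w ∉ I := fun h => hwS (hIS h)
  have hP : P (S ∪ {x, w}) (insert w I) := by
    refine ⟨?_, ?_, ?_, ?_⟩
    · exact Finset.insert_subset (by simp) (hIS.trans Finset.subset_union_left)
    · rw [IsConnSet, Finset.coe_union, Finset.coe_pair]
      exact connected_induce_union hS.preconnected (induce_pair_connected_of_adj hxw).preconnected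
        hu (by simp) hux
    · rw [Finset.coe_insert]
      exact hI.insert_of_notMem hwI fun i hi =>
        ⟨fun hwi => hw i (hIS hi) hwi.symm, hw i (hIS hi)⟩
    · have := (Finset.card_union_le S {x, w}).trans (Nat.add_le_add_left Finset.card_le_two _)
      rw [Finset.card_insert_of_notMem hwI]
      omega
  have := hmax (_, _) hP
  dsimp only at this
  rw [Finset.card_insert_of_notMem hwI] at this
  omega

end DominatingSet

def HadwigerIndepBound {V : Type*} (G : SimpleGraph V) (h : ℕ) : Prop :=
  2 * (Nat.card V : ℤ) - 5 ≤ (2 * G.indepNum - 1) * (2 * h - 5)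

namespace HadwigerIndepBound

variable {V : Type*} [Finite V] {G : SimpleGraph V} {h : ℕ}

theorem of_card_le_five_mul [Nonempty V] (hcard : Nat.card V ≤ 5 * G.indepNum) (hh : 5 ≤ h) :
    HadwigerIndepBound G h := by
  have hα : (1 : ℤ) ≤ G.indepNum := mod_cast G.one_le_indepNum
  have hcard : (Nat.card V : ℤ) ≤ 5 * G.indepNum := mod_cast hcard
  have hh : (5 : ℤ) ≤ h := mod_cast hh
  unfold HadwigerIndepBound
  nlinarith

theorem of_induce_of_induce_compl {s : Set V} (hs : ∀ u ∈ s, ∀ v, G.Adj u v → v ∈ s)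
    (h₁ : HadwigerIndepBound (G.induce s) h) (h₂ : HadwigerIndepBound (G.induce sᶜ) h)
    (hh : 5 ≤ h) : HadwigerIndepBound G h := by
  have hα : ((G.induce s).indepNum : ℤ) + (G.induce sᶜ).indepNum ≤ G.indepNum :=
    mod_cast G.indepNum_induce_add_indepNum_induce_compl_le hs
  have hcard : (Nat.card s : ℤ) + Nat.card ↥sᶜ = Nat.card V := by
    simp only [Nat.card_coe_set_eq]
    exact_mod_cast s.ncard_add_ncard_compl
  have hh : (5 : ℤ) ≤ h := mod_cast hh
  unfold HadwigerIndepBound at *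
  nlinarith

theorem of_induce_compl {D : Set V} (hD : Nat.card D < 2 * G.indepNum)
    (hDc : HadwigerIndepBound (G.induce Dᶜ) (h - 1)) (hh : 6 ≤ h) : HadwigerIndepBound G h := by
  have hα : ((G.induce Dᶜ).indepNum : ℤ) ≤ G.indepNum := mod_cast G.indepNum_induce_le Dᶜ
  have hcard : (Nat.card D : ℤ) + Nat.card ↥Dᶜ = Nat.card V := by
    simp only [Nat.card_coe_set_eq]
    exact_mod_cast D.ncard_add_ncard_compl
  have hD : (Nat.card D : ℤ) + 1 ≤ 2 * G.indepNum := mod_cast hD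
  have hh' : ((h - 1 : ℕ) : ℤ) = h - 1 := by omega
  have hh : (6 : ℤ) ≤ h := mod_cast hh
  unfold HadwigerIndepBound at *
  rw [hh'] at hDc
  nlinarith

end HadwigerIndepBound

theorem HadwigerIndepBound.of_hadwigerNum_le
    (RST : ∀ (W : Type) [Fintype W] (H : SimpleGraph W), ¬ HasCliqueMinor H 6 → H.Colorable 5)
    {V : Type} [Fintype V] [Nonempty V] (G : SimpleGraph V) {h : ℕ} (hh : 5 ≤ h)
    (hG : hadwigerNum G ≤ h) : HadwigerIndepBound G h := by
  classical
  induction hn : Nat.card V using Nat.strong_induction_on generalizing V h with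
  | _ n ih =>
  by_cases h6 : HasCliqueMinor G 6
  swap
  · exact .of_card_le_five_mul ((RST V G h6).card_le_mul_indepNum) hh
  have hh6 : 6 ≤ h := h6.le_hadwigerNum.trans hG
  have ih_induce (s : Set V) (hs : s.Nonempty) (hsc : sᶜ.Nonempty) {h' : ℕ} (hh' : 5 ≤ h')
      (hs' : hadwigerNum (G.induce s) ≤ h') : HadwigerIndepBound (G.induce s) h' := by
    have := hs.to_subtype
    refine ih _ ?_ (G.induce s) hh' hs' rfl
    have := s.ncard_add_ncard_compl
    have := (Set.ncard_pos (s := sᶜ)).mpr hsc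
    rw [Nat.card_coe_set_eq]
    omega
  by_cases hconn : G.Connected
  · obtain ⟨D, hDconn, hDdom, hDcard⟩ := exists_isConnSet_isDomSet_card_lt hconn
    have hDcard : Nat.card (D : Set V) < 2 * G.indepNum := by simpa using hDcard
    rcases (D : Set V)ᶜ.eq_empty_or_nonempty with hDc | hDc
    · rw [Set.compl_empty_iff] at hDc
      rw [hDc, Nat.card_univ] at hDcard
      exact .of_card_le_five_mul (by omega) (by omega)
    refine .of_induce_compl hDcard (ih_induce _ hDc ?_ (by omega) ?_) hh6
    · simpa using Set.nonempty_coe_sort.mp hDconn.nonempty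
    · exact Nat.le_sub_one_of_lt ((hadwigerNum_induce_compl_add_one_le hDconn hDdom).trans hG)
  · obtain ⟨v, w, hvw⟩ : ∃ v w, ¬ G.Reachable v w := by
      by_contra! hreach
      exact hconn ⟨hreach⟩
    let C : Set V := {u | G.Reachable v u}
    have hC : ∀ u ∈ C, ∀ x, G.Adj u x → x ∈ C := fun u hu x hux => hu.trans hux.reachable
    have hvC : v ∈ C := Reachable.refl v
    refine .of_induce_of_induce_compl hC ?_ ?_ hh
    · exact ih_induce C ⟨v, hvC⟩ ⟨w, hvw⟩ hh ((hadwigerNum_induce_le C).trans hG)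
    · exact ih_induce Cᶜ ⟨w, hvw⟩ (by simpa using ⟨v, hvC⟩) hh
        ((hadwigerNum_induce_le Cᶜ).trans hG)

theorem stmt_6
    (RST : ∀ (W : Type) [Fintype W] (H : SimpleGraph W),
      ¬ HasCliqueMinor H 6 → H.Colorable 5)
    {V : Type} [Fintype V] (G : SimpleGraph V) (hG : 5 ≤ hadwigerNum G) :
    (2 * (Fintype.card V : ℤ) - 5) ≤ (2 * _root_.indepNum G - 1) * (2 * hadwigerNum G - 5) := by
  have : Nonempty V := Fintype.card_pos_iff.mp (by have := hadwigerNum_le_card (G := G); omega)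
  have h := HadwigerIndepBound.of_hadwigerNum_le RST G hG le_rfl
  rwa [HadwigerIndepBound, Nat.card_eq_fintype_card, ← indepNum_eq_simpleGraph_indepNum] at h
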